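/- arXiv:1708.08545 — 5 statements merged into one kernel-verified Lean document; each statement's English description precedes it below -/
import Mathlib

section
/- For all 0 < α < 1/2, the sum of the sine Fourier coefficients of g_α satisfies ∑_{j=1}^∞ ĝ_α(j) = (2/α)∫₀^α x/sin(πx) dx + (2/π)·log((1 + cos(απ))/sin(απ)). -/
/-!
Integrating by parts twice gives `gcoeff α j = O(1 / j²)`, so the series converges absolutely.
Its partial sums are integrals of `gprofile α` against the kernel
`2 ∑_{j=1}^N sin (jπx) = cot (πx/2) - cos ((2N+1)πx/2) / sin (πx/2)`. Since
`gprofile α x ≤ x / α ≤ sin (πx/2) / α`, the quotient `gprofile α x / sin (πx/2)` is bounded on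
`(0, 1]`, so the Riemann–Lebesgue lemma kills the oscillating term and the sum equals
`∫₀¹ gprofile α x · cot (πx/2) dx`. On the plateau `[α, 1 - α]` this integrates to a difference of
`(2/π) log sin (πx/2)`; the two ramps, folded onto `[0, α]` by `x ↦ 1 - x`, combine through
`cot y + tan y = 2 / sin 2y` into `(2/α) ∫₀^α x / sin (πx) dx`.
-/

open Real

noncomputable def gprofile (α x : ℝ) : ℝ :=
  if x < α then x / α else if x < 1 - α then 1 else (1 - x) / α

noncomputable def gcoeff (α : ℝ) (j : ℕ) : ℝ :=
  2 * ∫ x in (0:ℝ)..1, gprofile α x * Real.sin (j * π * x)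

open MeasureTheory intervalIntegral Filter Topology Set

namespace Real

theorem sum_range_sin_succ_mul_two_sin_half (N : ℕ) (θ : ℝ) :
    (∑ j ∈ Finset.range N, sin ((j + 1) * θ)) * (2 * sin (θ / 2)) =
      cos (θ / 2) - cos ((2 * N + 1) * (θ / 2)) := by
  have hsum := sin_mul_sum_sin N θ θ
  have hprod := two_mul_sin_mul_sin (N * θ / 2) ((N - 1) * θ / 2 + θ)
  simp only [show ∀ j : ℕ, θ * j + θ = (j + 1) * θ from fun j => by ring] at hsum
  rw [show N * θ / 2 - ((N - 1) * θ / 2 + θ) = -(θ / 2) by ring, cos_neg,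
    show N * θ / 2 + ((N - 1) * θ / 2 + θ) = (2 * N + 1) * (θ / 2) by ring] at hprod
  linear_combination 2 * hsum + hprod

theorem cot_pi_div_two_sub (y : ℝ) : cot (π / 2 - y) = tan y := by
  rw [cot_eq_cos_div_sin, cos_pi_div_two_sub, sin_pi_div_two_sub, tan_eq_sin_div_cos]

-- Unconditional: where `sin y` or `cos y` vanishes, both sides are `0` since `x / 0 = 0`.
theorem cot_add_tan (y : ℝ) : cot y + tan y = 2 / sin (2 * y) := by
  rw [cot_eq_cos_div_sin, tan_eq_sin_div_cos, sin_two_mul]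
  rcases eq_or_ne (sin y) 0 with hs | hs
  · simp [hs]
  rcases eq_or_ne (cos y) 0 with hc | hc
  · simp [hc]
  field_simp
  linear_combination sin_sq_add_cos_sq y

theorem one_add_cos_two_mul_div_sin_two_mul (y : ℝ) :
    (1 + cos (2 * y)) / sin (2 * y) = cot y := by
  rw [cos_two_mul, sin_two_mul, cot_eq_cos_div_sin]
  rcases eq_or_ne (cos y) 0 with hc | hc
  · simp [hc]
  field_simp
  ring

end Real

theorem integral_affine_mul_sin (p q : ℝ) {c : ℝ} (hc : c ≠ 0) (a b : ℝ) :
    ∫ x in a..b, (p * x + q) * sin (c * x) =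
      (-(p * b + q) * cos (c * b) + p * sin (c * b) / c) / c -
        (-(p * a + q) * cos (c * a) + p * sin (c * a) / c) / c := by
  refine integral_eq_sub_of_hasDerivAt
    (f := fun x => (-(p * x + q) * cos (c * x) + p * sin (c * x) / c) / c) (fun x _ => ?_)
    ((by fun_prop : Continuous fun x => (p * x + q) * sin (c * x)).intervalIntegrable _ _)
  have hcx : HasDerivAt (fun y => c * y) c x := by simpa using (hasDerivAt_id x).const_mul c
  have hlin : HasDerivAt (fun y => p * y + q) p x := by
    simpa using ((hasDerivAt_id x).const_mul p).add_const q
  have hF :=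
    ((hlin.fun_neg.fun_mul hcx.cos).fun_add ((hcx.sin.div_const c).const_mul p)).div_const c
  exact (hF.congr_deriv (by field_simp; ring)).congr_of_eventuallyEq (.of_forall fun y => by ring)

theorem integral_cot {a b : ℝ} (h : ∀ x ∈ uIcc a b, sin x ≠ 0) :
    ∫ x in a..b, cot x = log (sin b) - log (sin a) := by
  have hcot : cot = fun x => cos x / sin x := funext cot_eq_cos_div_sin
  refine integral_eq_sub_of_hasDerivAt (f := fun x => log (sin x)) (fun x hx => ?_)
    (ContinuousOn.intervalIntegrable ?_)
  · rw [hcot]; exact (hasDerivAt_sin x).log (h x hx)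
  · rw [hcot]; exact continuousOn_cos.div continuousOn_sin h

theorem integral_cot_pi_mul_div_two {a b : ℝ} (ha : 0 < a) (hab : a ≤ b) (hb : b < 2) :
    ∫ x in a..b, cot (π * x / 2) = 2 / π * (log (sin (π * b / 2)) - log (sin (π * a / 2))) := by
  simp_rw [mul_div_right_comm π _ 2]
  refine (integral_comp_mul_left (fun x => cot x) (by positivity)).trans ?_
  rw [integral_cot fun y hy => ?_, smul_eq_mul, inv_div]
  rw [uIcc_of_le (by gcongr)] at hy
  exact (sin_pos_of_pos_of_lt_pi ((by positivity : 0 < π / 2 * a).trans_le hy.1)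
    (hy.2.trans_lt (by nlinarith [pi_pos]))).ne'

theorem tendsto_integral_mul_cos_cocompact {f : ℝ → ℝ} (hf : Integrable f) :
    Tendsto (fun t : ℝ => ∫ x, f x * cos (t * x)) (cocompact ℝ) (𝓝 0) := by
  -- At frequency `w = -t / 2π` the character `𝐞 (-(x * w))` is `exp (i t x)`,
  -- whose real part is `cos (t x)`.
  have hscale : Tendsto (fun t : ℝ => -(2 * π)⁻¹ * t) (cocompact ℝ) (cocompact ℝ) :=
    tendsto_cocompact_mul_left₀ (by simp [pi_ne_zero])
  have hRL := (Complex.continuous_re.tendsto 0).comp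
    ((Real.tendsto_integral_exp_smul_cocompact (fun x => (f x : ℂ))).comp hscale)
  rw [Complex.zero_re] at hRL
  refine hRL.congr fun t => ?_
  have hint := (Real.fourierIntegral_convergent_iff (μ := volume) (E := ℂ) (-(2 * π)⁻¹ * t)).2
    (hf.ofReal (𝕜 := ℂ))
  simp only [RCLike.inner_apply, conj_trivial, mul_comm (-(2 * π)⁻¹ * t)] at hint
  refine (integral_re hint).symm.trans (integral_congr_ae (ae_of_all _ fun x => ?_))
  have harg : 2 * π * -(x * (-(2 * π)⁻¹ * t)) = t * x := by field_simp
  simp only [Circle.smul_def, Real.fourierChar_apply, smul_eq_mul, RCLike.re_to_complex, harg,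
    Complex.coe_algebraMap]
  rw [Complex.re_mul_ofReal, Complex.exp_ofReal_mul_I_re, mul_comm]

theorem tendsto_intervalIntegral_mul_cos_atTop {f : ℝ → ℝ} {a b : ℝ}
    (hf : IntervalIntegrable f volume a b) :
    Tendsto (fun t : ℝ => ∫ x in a..b, f x * cos (t * x)) atTop (𝓝 0) := by
  have hRL := (tendsto_integral_mul_cos_cocompact
    ((intervalIntegrable_iff.1 hf).integrable_indicator measurableSet_uIoc)).mono_left
    atTop_le_cocompact
  simpa only [intervalIntegral_eq_integral_uIoc,
    ← MeasureTheory.integral_indicator measurableSet_uIoc, indicator_mul_left, smul_zero]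
    using hRL.const_smul (if a ≤ b then (1 : ℝ) else -1)

section gprofile

variable {α x : ℝ}

theorem gprofile_of_le (hα0 : α ≠ 0) (hα : α ≤ 1 / 2) (hx : x ≤ α) : gprofile α x = x / α := by
  rcases hx.lt_or_eq with hx | hx
  · rw [gprofile, if_pos hx]
  rw [hx, gprofile, if_neg (lt_irrefl α)]
  split_ifs with h
  · exact (div_self hα0).symm
  · rw [show 1 - α = α by linarith]

theorem gprofile_of_mem_Icc (hα0 : α ≠ 0) (hx : x ∈ Icc α (1 - α)) : gprofile α x = 1 := by
  rcases hx.2.lt_or_eq with h | rfl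
  · rw [gprofile, if_neg hx.1.not_gt, if_pos h]
  · rw [gprofile, if_neg hx.1.not_gt, if_neg (lt_irrefl _), sub_sub_cancel, div_self hα0]

theorem gprofile_of_ge (hα : α ≤ 1 / 2) (hx : 1 - α ≤ x) : gprofile α x = (1 - x) / α := by
  rw [gprofile, if_neg (by linarith), if_neg hx.not_gt]

theorem continuous_gprofile (hα0 : α ≠ 0) (hα : α ≤ 1 / 2) : Continuous (gprofile α) := by
  have hg : gprofile α =
      fun x => if α ≤ x then (if 1 - α ≤ x then (1 - x) / α else 1) else x / α := by
    funext x
    simp only [gprofile, ← not_lt, ite_not]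
  rw [hg]
  refine Continuous.if_le (Continuous.if_le (by fun_prop) continuous_const continuous_const
    continuous_id fun x hx => ?_) (by fun_prop) continuous_const continuous_id fun x hx => ?_
  · rw [← hx, sub_sub_cancel, div_self hα0]
  · subst hx
    split_ifs with h
    · rw [show 1 - α = α by linarith]
    · rw [div_self hα0]

theorem gprofile_nonneg (hα0 : 0 < α) (hx0 : 0 ≤ x) (hx1 : x ≤ 1) : 0 ≤ gprofile α x := by
  unfold gprofile
  split_ifs
  · positivity
  · exact zero_le_one
  · exact div_nonneg (by linarith) hα0.le

theorem gprofile_le_div (hα0 : 0 < α) : gprofile α x ≤ x / α := by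
  unfold gprofile
  split_ifs with h₁ h₂
  · exact le_rfl
  · rwa [le_div_iff₀ hα0, one_mul, ← not_lt]
  · exact div_le_div_of_nonneg_right (by linarith) hα0.le

theorem abs_gprofile_div_sin_le (hα0 : 0 < α) (hx : x ∈ Ioc 0 1) :
    |gprofile α x / sin (π * x / 2)| ≤ 1 / α := by
  have hsin : x ≤ sin (π * x / 2) := by
    convert le_sin_mul hx.1.le hx.2 using 2; ring
  have hsin0 : 0 < sin (π * x / 2) := hx.1.trans_le hsin
  rw [abs_of_nonneg (div_nonneg (gprofile_nonneg hα0 hx.1.le hx.2) hsin0.le),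
    div_le_div_iff₀ hsin0 hα0, one_mul]
  calc gprofile α x * α ≤ x / α * α := mul_le_mul_of_nonneg_right (gprofile_le_div hα0) hα0.le
    _ = x := div_mul_cancel₀ x hα0.ne'
    _ ≤ sin (π * x / 2) := hsin

theorem intervalIntegrable_gprofile_div_sin (hα0 : 0 < α) (hα : α ≤ 1 / 2) :
    IntervalIntegrable (fun x => gprofile α x / sin (π * x / 2)) volume 0 1 := by
  rw [intervalIntegrable_iff_integrableOn_Ioc_of_le zero_le_one]
  refine Measure.integrableOn_of_bounded (M := 1 / α) (by simp)
    (((continuous_gprofile hα0.ne' hα).measurable.div (by fun_prop)).aestronglyMeasurable) ?_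
  exact (ae_restrict_iff' measurableSet_Ioc).2
    (.of_forall fun x hx => abs_gprofile_div_sin_le hα0 hx)

theorem gcoeff_eq (hα0 : 0 < α) (hα : α ≤ 1 / 2) {j : ℕ} (hj : j ≠ 0) :
    gcoeff α j = 2 / (α * (j * π) ^ 2) * (sin (j * π * α) + sin (j * π * (1 - α))) := by
  set c : ℝ := j * π with hc
  have hc0 : c ≠ 0 := mul_ne_zero (Nat.cast_ne_zero.2 hj) pi_ne_zero
  have hint : ∀ a b, IntervalIntegrable (fun x => gprofile α x * sin (c * x)) volume a b :=
    fun a b => ((continuous_gprofile hα0.ne' hα).mul (by fun_prop)).intervalIntegrable a b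
  have hleft : ∫ x in 0..α, gprofile α x * sin (c * x) = ∫ x in 0..α, (α⁻¹ * x + 0) * sin (c * x) :=
    integral_congr fun x hx => by
      rw [gprofile_of_le hα0.ne' hα (uIcc_of_le hα0.le ▸ hx).2]; ring
  have hmid : ∫ x in α..1 - α, gprofile α x * sin (c * x) =
      ∫ x in α..1 - α, (0 * x + 1) * sin (c * x) :=
    integral_congr fun x hx => by
      rw [gprofile_of_mem_Icc hα0.ne' (uIcc_of_le (show α ≤ 1 - α by linarith) ▸ hx)]; ring
  have hright : ∫ x in 1 - α..1, gprofile α x * sin (c * x) =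
      ∫ x in 1 - α..1, (-α⁻¹ * x + α⁻¹) * sin (c * x) :=
    integral_congr fun x hx => by
      rw [gprofile_of_ge hα (uIcc_of_le (show 1 - α ≤ 1 by linarith) ▸ hx).1]; ring
  have hsin : sin c = 0 := sin_nat_mul_pi j
  rw [gcoeff, ← hc, ← integral_add_adjacent_intervals (hint 0 α) (hint α 1),
    ← integral_add_adjacent_intervals (hint α (1 - α)) (hint (1 - α) 1), hleft, hmid, hright,
    integral_affine_mul_sin _ _ hc0, integral_affine_mul_sin _ _ hc0,
    integral_affine_mul_sin _ _ hc0]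
  simp only [mul_zero, mul_one, sin_zero, hsin]
  field_simp
  ring

theorem abs_gcoeff_le (hα0 : 0 < α) (hα : α ≤ 1 / 2) {j : ℕ} (hj : j ≠ 0) :
    |gcoeff α j| ≤ 4 / (α * π ^ 2) * (1 / (j : ℝ) ^ 2) := by
  have hsin : |sin (j * π * α) + sin (j * π * (1 - α))| ≤ 2 :=
    (abs_add_le _ _).trans
      (by linarith [abs_sin_le_one (j * π * α), abs_sin_le_one (j * π * (1 - α))])
  have hj0 : (0 : ℝ) < j := Nat.cast_pos.2 (Nat.pos_of_ne_zero hj)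
  rw [gcoeff_eq hα0 hα hj, abs_mul, abs_of_pos (by positivity)]
  calc 2 / (α * (j * π) ^ 2) * |sin (j * π * α) + sin (j * π * (1 - α))|
      ≤ 2 / (α * (j * π) ^ 2) * 2 := by gcongr
    _ = 4 / (α * π ^ 2) * (1 / (j : ℝ) ^ 2) := by field_simp; ring

theorem summable_gcoeff_succ (hα0 : 0 < α) (hα : α ≤ 1 / 2) :
    Summable fun j : ℕ => gcoeff α (j + 1) := by
  have hinvsq : Summable fun j : ℕ => 4 / (α * π ^ 2) * (1 / ((j + 1 : ℕ) : ℝ) ^ 2) :=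
    ((summable_nat_add_iff 1).2 (Real.summable_one_div_nat_pow.2 one_lt_two)).mul_left _
  exact hinvsq.of_norm_bounded fun j => abs_gcoeff_le hα0 hα j.succ_ne_zero

theorem sum_range_gcoeff_succ (hα0 : 0 < α) (hα : α ≤ 1 / 2) (N : ℕ) :
    ∑ j ∈ Finset.range N, gcoeff α (j + 1) =
      (∫ x in 0..1, gprofile α x * cot (π * x / 2)) -
        ∫ x in 0..1, gprofile α x / sin (π * x / 2) * cos ((2 * N + 1) * (π / 2) * x) := by
  have hq := intervalIntegrable_gprofile_div_sin hα0 hα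
  have hcot : (fun x => gprofile α x * cot (π * x / 2)) =
      fun x => gprofile α x / sin (π * x / 2) * cos (π * x / 2) := by
    funext x; rw [cot_eq_cos_div_sin]; ring
  rw [hcot, ← integral_sub (hq.mul_continuousOn (by fun_prop)) (hq.mul_continuousOn (by fun_prop))]
  simp only [gcoeff, ← intervalIntegral.integral_const_mul]
  have hcont := continuous_gprofile hα0.ne' hα
  rw [← intervalIntegral.integral_finsetSum fun j _ =>
    (by fun_prop : Continuous _).intervalIntegrable 0 1]
  refine integral_congr fun x hx => ?_
  rw [uIcc_of_le zero_le_one] at hx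
  rcases hx.1.eq_or_lt with rfl | hx0
  · simp
  have hs : 0 < sin (π * x / 2) :=
    sin_pos_of_pos_of_lt_pi (by positivity) (by nlinarith [pi_pos, hx.2])
  have hkernel := sum_range_sin_succ_mul_two_sin_half N (π * x)
  have hsum : ∑ j ∈ Finset.range N, 2 * (gprofile α x * sin (((j + 1 : ℕ) : ℝ) * π * x)) =
      2 * gprofile α x * ∑ j ∈ Finset.range N, sin ((j + 1) * (π * x)) := by
    rw [Finset.mul_sum]
    refine Finset.sum_congr rfl fun j _ => ?_
    push_cast; ring_nf
  rw [hsum, show (2 * N + 1) * (π / 2) * x = (2 * N + 1) * (π * x / 2) by ring, ← mul_sub,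
    ← hkernel, div_mul_eq_mul_div, eq_div_iff hs.ne']
  ring

theorem tendsto_sum_range_gcoeff_succ (hα0 : 0 < α) (hα : α ≤ 1 / 2) :
    Tendsto (fun N => ∑ j ∈ Finset.range N, gcoeff α (j + 1)) atTop
      (𝓝 (∫ x in 0..1, gprofile α x * cot (π * x / 2))) := by
  have hfreq : Tendsto (fun N : ℕ => (2 * N + 1) * (π / 2)) atTop atTop :=
    (tendsto_atTop_add_const_right _ 1
      (tendsto_natCast_atTop_atTop.const_mul_atTop two_pos)).atTop_mul_const (by positivity)
  have hRL := (tendsto_intervalIntegral_mul_cos_atTop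
    (intervalIntegrable_gprofile_div_sin hα0 hα)).comp hfreq
  simpa only [sum_range_gcoeff_succ hα0 hα, Function.comp_apply, sub_zero]
    using tendsto_const_nhds.sub hRL

theorem intervalIntegrable_gprofile_mul_cot (hα0 : 0 < α) (hα : α ≤ 1 / 2) :
    IntervalIntegrable (fun x => gprofile α x * cot (π * x / 2)) volume 0 1 := by
  refine ((intervalIntegrable_gprofile_div_sin hα0 hα).mul_continuousOn
    (g := fun x => cos (π * x / 2)) (by fun_prop)).congr fun x _ => ?_
  simp only [cot_eq_cos_div_sin]
  ring

theorem gprofile_mul_cot_add_one_sub (hα0 : 0 < α) (hα : α ≤ 1 / 2) (hx : x ≤ α) :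
    gprofile α x * cot (π * x / 2) + gprofile α (1 - x) * cot (π * (1 - x) / 2) =
      2 / α * (x / sin (π * x)) := by
  rw [gprofile_of_le hα0.ne' hα hx, gprofile_of_ge hα (by linarith), sub_sub_cancel,
    show π * (1 - x) / 2 = π / 2 - π * x / 2 by ring, cot_pi_div_two_sub, ← mul_add, cot_add_tan,
    show 2 * (π * x / 2) = π * x by ring]
  ring

theorem integral_gprofile_mul_cot (hα0 : 0 < α) (hα : α ≤ 1 / 2) :
    ∫ x in 0..1, gprofile α x * cot (π * x / 2) =
      (2 / α) * (∫ x in 0..α, x / sin (π * x)) +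
        (2 / π) * log ((1 + cos (α * π)) / sin (α * π)) := by
  set k : ℝ → ℝ := fun x => gprofile α x * cot (π * x / 2) with hk_def
  have hk {a b : ℝ} (ha : 0 ≤ a) (hab : a ≤ b) (hb : b ≤ 1) : IntervalIntegrable k volume a b :=
    (intervalIntegrable_gprofile_mul_cot hα0 hα).mono_set (by
      rw [uIcc_of_le hab, uIcc_of_le zero_le_one]; exact Icc_subset_Icc ha hb)
  have hsplit : ∫ x in 0..1, k x =
      (∫ x in 0..α, k x) + (∫ x in α..1 - α, k x) + ∫ x in 0..α, k (1 - x) := by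
    rw [integral_comp_sub_left, sub_zero,
      integral_add_adjacent_intervals (hk le_rfl hα0.le (by linarith))
        (hk hα0.le (by linarith) (by linarith)),
      integral_add_adjacent_intervals (hk le_rfl (by linarith) (by linarith))
        (hk (by linarith) (by linarith) le_rfl)]
  have houter : (∫ x in 0..α, k x) + ∫ x in 0..α, k (1 - x) =
      (2 / α) * ∫ x in 0..α, x / sin (π * x) := by
    have hk_reflect : IntervalIntegrable (fun x => k (1 - x)) volume 0 α := by
      simpa using ((hk (a := 1 - α) (by linarith) (by linarith) le_rfl).comp_sub_left 1).symm
    rw [← integral_add (hk le_rfl hα0.le (by linarith)) hk_reflect,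
      ← intervalIntegral.integral_const_mul]
    exact integral_congr fun x hx =>
      gprofile_mul_cot_add_one_sub hα0 hα (uIcc_of_le hα0.le ▸ hx).2
  have hplateau : ∫ x in α..1 - α, k x = ∫ x in α..1 - α, cot (π * x / 2) :=
    integral_congr fun x hx => by
      simp only [hk_def]
      rw [gprofile_of_mem_Icc hα0.ne' (uIcc_of_le (show α ≤ 1 - α by linarith) ▸ hx), one_mul]
  have hsin : 0 < sin (π * α / 2) :=
    sin_pos_of_pos_of_lt_pi (by positivity) (by nlinarith [pi_pos])
  have hcos : 0 < cos (π * α / 2) :=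
    cos_pos_of_mem_Ioo ⟨by nlinarith [pi_pos], by nlinarith [pi_pos]⟩
  have hlog : log (sin (π * (1 - α) / 2)) - log (sin (π * α / 2)) =
      log ((1 + cos (α * π)) / sin (α * π)) := by
    rw [show π * (1 - α) / 2 = π / 2 - π * α / 2 by ring, sin_pi_div_two_sub,
      ← log_div hcos.ne' hsin.ne', show α * π = 2 * (π * α / 2) by ring,
      one_add_cos_two_mul_div_sin_two_mul, cot_eq_cos_div_sin]
  rw [hsplit, hplateau, integral_cot_pi_mul_div_two hα0 (by linarith) (by linarith), hlog]
  linear_combination houter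

end gprofile

theorem stmt_1 (α : ℝ) (hα0 : 0 < α) (hα : α < 1/2) :
    ∑' j : ℕ, gcoeff α (j + 1) =
      (2 / α) * (∫ x in (0:ℝ)..α, x / Real.sin (π * x)) +
        (2 / π) * Real.log ((1 + Real.cos (α * π)) / Real.sin (α * π)) := by
  rw [← integral_gprofile_mul_cot hα0 hα.le]
  exact tendsto_nhds_unique (summable_gcoeff_succ hα0 hα.le).hasSum.tendsto_sum_nat
    (tendsto_sum_range_gcoeff_succ hα0 hα.le)
end

section
/- For all r ∈ [0,1) and x ∈ (0,1), the series identity 2·∑_{k=0}^∞ r^{2k+1} sin((2k+1)πx) = λ(r)·sin(πx)/(1 − λ(r)²·cos²(πx)) holds, where λ(r) = 2r/(1+r²), and the series on the left converges absolutely. -/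
/-!
With `z = r e^{iθ}` the series is the imaginary part of `∑ z^(2k+1) = z / (1 - z²)`.
Since `z (1 - z̄²) = z - |z|² z̄`, this imaginary part is `r (1 + r²) sin θ / |1 - z²|²`, and
`|1 - z²|² = (1 + r²)² - 4 r² cos² θ`; dividing through by `(1 + r²)²` gives the form in `λ(r)`.
-/

open Real

section OddPowers

variable {K : Type*} [NormedDivisionRing K] {z : K}

theorem hasSum_pow_two_mul_add_one (hz : ‖z‖ < 1) :
    HasSum (fun k : ℕ => z ^ (2 * k + 1)) (z / (1 - z ^ 2)) := by
  have hz2 : ‖z ^ 2‖ < 1 := by rw [norm_pow]; nlinarith [norm_nonneg z]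
  simpa [div_eq_mul_inv, pow_succ', pow_mul] using
    (hasSum_geometric_of_norm_lt_one hz2).mul_left z

theorem summable_norm_pow_two_mul_add_one (hz : ‖z‖ < 1) :
    Summable (fun k : ℕ => ‖z ^ (2 * k + 1)‖) := by
  simp_rw [norm_pow]
  exact (summable_geometric_of_lt_one (norm_nonneg z) hz).comp_injective
    (fun a b h => by simpa using h)

end OddPowers

namespace Complex

theorem im_div_one_sub_sq (z : ℂ) :
    (z / (1 - z ^ 2)).im = z.im * (1 + normSq z) / normSq (1 - z ^ 2) := by
  simp only [div_im, normSq_apply, sub_re, sub_im, one_re, one_im, pow_two, mul_re, mul_im]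
  ring

theorem normSq_one_sub_sq (z : ℂ) :
    normSq (1 - z ^ 2) = (1 + normSq z) ^ 2 - 4 * z.re ^ 2 := by
  simp only [normSq_apply, sub_re, sub_im, one_re, one_im, pow_two, mul_re, mul_im]
  ring

theorem im_ofReal_mul_exp_mul_I_pow (r θ : ℝ) (n : ℕ) :
    ((r * exp (θ * I)) ^ n).im = r ^ n * Real.sin (n * θ) := by
  rw [mul_pow, ← ofReal_pow, ← exp_nat_mul, ← mul_assoc, ← ofReal_natCast, ← ofReal_mul,
    im_ofReal_mul, exp_ofReal_mul_I_im]

end Complex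

open Complex in
theorem hasSum_pow_two_mul_add_one_mul_sin {r : ℝ} (hr : |r| < 1) (θ : ℝ) :
    HasSum (fun k : ℕ => r ^ (2 * k + 1) * Real.sin ((2 * k + 1) * θ))
      (r * (1 + r ^ 2) * Real.sin θ / ((1 + r ^ 2) ^ 2 - 4 * r ^ 2 * Real.cos θ ^ 2)) := by
  set z : ℂ := r * exp (θ * I)
  have hz : ‖z‖ = |r| := by simp [z, norm_exp_ofReal_mul_I]
  have hre : z.re = r * Real.cos θ := by simp [z, exp_ofReal_mul_I_re]
  have him : z.im = r * Real.sin θ := by simp [z, exp_ofReal_mul_I_im]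
  have hnormSq : normSq z = r ^ 2 := by rw [normSq_eq_norm_sq, hz, sq_abs]
  have := hasSum_im (hasSum_pow_two_mul_add_one (hz ▸ hr : ‖z‖ < 1))
  convert this using 1
  · ext k
    rw [im_ofReal_mul_exp_mul_I_pow]
    push_cast
    rfl
  · rw [im_div_one_sub_sq, normSq_one_sub_sq, hnormSq, hre, him]
    ring

theorem summable_abs_pow_two_mul_add_one_mul_sin {r : ℝ} (hr : |r| < 1) (θ : ℝ) :
    Summable (fun k : ℕ => |r ^ (2 * k + 1) * Real.sin ((2 * k + 1) * θ)|) := by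
  refine (summable_norm_pow_two_mul_add_one (norm_eq_abs r ▸ hr)).of_nonneg_of_le
    (fun k => abs_nonneg _) (fun k => ?_)
  rw [abs_mul, norm_eq_abs]
  exact mul_le_of_le_one_right (abs_nonneg _) (abs_sin_le_one _)

theorem stmt_2_general (r x : ℝ) (hr0 : 0 ≤ r) (hr1 : r < 1) :
    Summable (fun k : ℕ => |r ^ (2 * k + 1) * Real.sin ((2 * k + 1) * π * x)|) ∧
    2 * ∑' k : ℕ, r ^ (2 * k + 1) * Real.sin ((2 * k + 1) * π * x) =
      (2 * r / (1 + r^2)) * Real.sin (π * x) /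
        (1 - (2 * r / (1 + r^2))^2 * Real.cos (π * x)^2) := by
  have hr : |r| < 1 := abs_lt.2 ⟨by linarith, hr1⟩
  simp_rw [mul_assoc _ π x]
  refine ⟨summable_abs_pow_two_mul_add_one_mul_sin hr _, ?_⟩
  rw [(hasSum_pow_two_mul_add_one_mul_sin hr _).tsum_eq]
  have h1r : 1 + r ^ 2 ≠ 0 := by positivity
  field_simp
  ring

theorem stmt_2 (r x : ℝ) (hr0 : 0 ≤ r) (hr1 : r < 1) (hx0 : 0 < x) (hx1 : x < 1) :
    Summable (fun k : ℕ => |r ^ (2 * k + 1) * Real.sin ((2 * k + 1) * π * x)|) ∧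
    2 * ∑' k : ℕ, r ^ (2 * k + 1) * Real.sin ((2 * k + 1) * π * x) =
      (2 * r / (1 + r^2)) * Real.sin (π * x) /
        (1 - (2 * r / (1 + r^2))^2 * Real.cos (π * x)^2) :=
  stmt_2_general r x hr0 hr1
end

section
/- For all 0 < α < 1/25, the inequality sin(3πα)/9 + sin(5πα)/25 + sin(9πα)/81 + sin(25πα)/625 < sin(πα) holds. -/
/-!
With `x = π α ∈ (0, 1)`, bound each `sin (n x)` above by `n x`, so the left side is less than
`(1/3 + 1/5 + 1/9 + 1/25) x = 154 x / 225`, while `sin x > x - x³/6 ≥ 5 x / 6`.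
-/

open Real

theorem stmt_5 (α : ℝ) (hα0 : 0 < α) (hα : α < 1/25) :
    Real.sin (3 * π * α) / 9 + Real.sin (5 * π * α) / 25 +
      Real.sin (9 * π * α) / 81 + Real.sin (25 * π * α) / 625 <
        Real.sin (π * α) := by
  simp only [mul_assoc]
  set x := π * α
  have hx0 : 0 < x := by positivity
  have hx1 : x ≤ 1 := by nlinarith [pi_lt_four]
  have hcube : x ^ 3 ≤ x := pow_le_of_le_one hx0.le hx1 (by norm_num)
  have hsin : x - x ^ 3 / 6 < sin x := sin_gt_sub_cube hx0
  have h3 := sin_lt (by positivity : 0 < 3 * x)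
  have h5 := sin_lt (by positivity : 0 < 5 * x)
  have h9 := sin_lt (by positivity : 0 < 9 * x)
  have h25 := sin_lt (by positivity : 0 < 25 * x)
  linarith
end

section
/- Let f be a 2-periodic function with sine Fourier coefficients f̂(j) satisfying |f̂(j)| ≤ φ_j for a summable sequence (φ_j) with total sum φ. Let F ⊆ ℕ be finite with 1 ∈ F, and let μ = min over the d-torus of |∑_{j∈F} f̂(j) w₁^{ν_{p₁}(j)}⋯w_d^{ν_{p_d}(j)}|, where p₁,…,p_d are the primes dividing elements of F and ν_p(j) is the p-adic valuation of j. If ∑_{j∈F,j≠1}|f̂(j)| < f̂(1) and μ − φ + ∑_{j∈F}|f̂(j)| + ∑_{j=1}^k (φ_j − |f̂(j)|) > 0 for some k, then the multiplier m_f(z) = ∑_{j≥1} f̂(j) j^{-z} satisfies inf_{Re z > 0} |m_f(z)| ≥ μ(1 − σ) > 0 for some σ < 1, and sup_{Re z > 0} |m_f(z)| < ∞. -/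
/-!
For `0 < re z` the point `w q = q ^ (-z)` lies in the closed unit polydisk, and there the
Dirichlet polynomial `∑ n ∈ F, c n * n ^ (-z)` equals `p w`, where `p := dirichletPoly c F`.
Since `c 1` dominates the other coefficients, `p` has no zero on the closed polydisk, so the
maximum modulus principle for `1 / p`, applied one variable at a time, shows `μ ≤ ‖p‖` on the
whole polydisk and not only on the torus. The tail of the series is at most `∑ n ∉ F, ‖c n‖`,
and the hypothesis on `k` makes `μ` minus this bound positive.
-/

open Real

theorem Complex.le_norm_of_forall_mem_frontier_le_norm {E : Type*} [NormedAddCommGroup E]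
    [NormedSpace ℂ E] [Nontrivial E] {g : E → ℂ} {U : Set E} (hU : Bornology.IsBounded U)
    (hg : DiffContOnCl ℂ g U) (hg0 : ∀ x ∈ closure U, g x ≠ 0) {μ : ℝ}
    (hμ : ∀ x ∈ frontier U, μ ≤ ‖g x‖) {x : E} (hx : x ∈ closure U) : μ ≤ ‖g x‖ := by
  rcases le_or_gt μ 0 with hμ0 | hμ0
  · exact hμ0.trans (norm_nonneg _)
  have hinv : DiffContOnCl ℂ (fun x => (g x)⁻¹) U :=
    ⟨hg.differentiableOn.inv fun x hx => hg0 x (subset_closure hx), hg.continuousOn.inv₀ hg0⟩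
  have := Complex.norm_le_of_forall_mem_frontier_norm_le hU hinv (C := μ⁻¹) (fun y hy => by
    rw [norm_inv]
    exact inv_anti₀ hμ0 (hμ y hy)) hx
  rw [norm_inv] at this
  exact (inv_le_inv₀ (norm_pos_iff.mpr (hg0 x hx)) hμ0).mp this

/-- `P` contains the coordinates of `w` that are not yet on the unit circle; the induction
moves them there one at a time. -/
theorem le_norm_of_forall_torus_le_norm {ι : Type*} [DecidableEq ι] {S : (ι → ℂ) → ℂ}
    (hS : ∀ w a, Differentiable ℂ fun u => S (Function.update w a u))
    (hS0 : ∀ w, (∀ i, ‖w i‖ ≤ 1) → S w ≠ 0) {μ : ℝ}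
    (hμ : ∀ w, (∀ i, ‖w i‖ = 1) → μ ≤ ‖S w‖) (P : Finset ι) {w : ι → ℂ}
    (hw : ∀ i, ‖w i‖ ≤ 1) (hwP : ∀ i ∉ P, ‖w i‖ = 1) : μ ≤ ‖S w‖ := by
  induction P using Finset.induction generalizing w with
  | empty => exact hμ w fun i => hwP i (Finset.notMem_empty i)
  | @insert a P _ ih =>
    have hupdate : ∀ u : ℂ, ‖u‖ ≤ 1 → ∀ i, ‖Function.update w a u i‖ ≤ 1 := by
      intro u hu i
      rcases eq_or_ne i a with rfl | hi
      · simpa using hu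
      · simpa [hi] using hw i
    have hclosure : closure (Metric.ball (0 : ℂ) 1) = Metric.closedBall 0 1 :=
      closure_ball 0 one_ne_zero
    have key := Complex.le_norm_of_forall_mem_frontier_le_norm (U := Metric.ball (0 : ℂ) 1)
      Metric.isBounded_ball (hS w a).diffContOnCl
      (fun u hu => hS0 _ (hupdate u (by simpa [hclosure] using hu)))
      (fun u hu => by
        rw [frontier_ball 0 one_ne_zero, mem_sphere_zero_iff_norm] at hu
        refine ih (hupdate u hu.le) fun i hi => ?_
        rcases eq_or_ne i a with rfl | hia
        · simpa using hu
        · simpa [hia] using hwP i (by simp [hia, hi]))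
      (x := w a) (by simpa [hclosure] using hw a)
    simpa using key

noncomputable def factorizationMonomial (w : ℕ → ℂ) (n : ℕ) : ℂ :=
  ∏ q ∈ n.primeFactors, w q ^ n.factorization q

noncomputable def dirichletPoly (c : ℕ → ℂ) (F : Finset ℕ) (w : ℕ → ℂ) : ℂ :=
  ∑ n ∈ F, c n * factorizationMonomial w n

theorem factorizationMonomial_congr {w w' : ℕ → ℂ} {n : ℕ}
    (h : ∀ q ∈ n.primeFactors, w q = w' q) :
    factorizationMonomial w n = factorizationMonomial w' n :=
  Finset.prod_congr rfl fun q hq => by rw [h q hq]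

theorem norm_factorizationMonomial_le_one {w : ℕ → ℂ} (hw : ∀ q, ‖w q‖ ≤ 1) (n : ℕ) :
    ‖factorizationMonomial w n‖ ≤ 1 := by
  rw [factorizationMonomial, norm_prod]
  exact Finset.prod_le_one (fun _ _ => norm_nonneg _) fun q _ => by
    rw [norm_pow]; exact pow_le_one₀ (norm_nonneg _) (hw q)

theorem factorizationMonomial_natCast_cpow (z : ℂ) {n : ℕ} (hn : n ≠ 0) :
    factorizationMonomial (fun q => (q : ℂ) ^ z) n = (n : ℂ) ^ z := by
  rw [Nat.multiplicative_factorization (fun n => (n : ℂ) ^ z)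
    (fun a b _ => by push_cast; exact Complex.natCast_mul_natCast_cpow a b z) (by simp) hn]
  refine Finset.prod_congr rfl fun q _ => ?_
  dsimp only
  rw [Nat.cast_pow, ← Complex.natCast_cpow_natCast_mul, Complex.cpow_nat_mul]

theorem differentiable_dirichletPoly_update (c : ℕ → ℂ) (F : Finset ℕ) (w : ℕ → ℂ) (a : ℕ) :
    Differentiable ℂ fun u => dirichletPoly c F (Function.update w a u) := by
  unfold dirichletPoly factorizationMonomial
  refine Differentiable.fun_sum fun n _ => (Differentiable.fun_finsetProd fun q _ => ?_).const_mul _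
  rcases eq_or_ne q a with rfl | hq
  · simp
  · simp [hq]

theorem norm_sub_sum_le_norm_dirichletPoly {c : ℕ → ℂ} {F : Finset ℕ} (h1F : 1 ∈ F)
    {w : ℕ → ℂ} (hw : ∀ q, ‖w q‖ ≤ 1) :
    ‖c 1‖ - ∑ n ∈ F.erase 1, ‖c n‖ ≤ ‖dirichletPoly c F w‖ := by
  have htail : ‖∑ n ∈ F.erase 1, c n * factorizationMonomial w n‖ ≤ ∑ n ∈ F.erase 1, ‖c n‖ :=
    (norm_sum_le _ _).trans <| Finset.sum_le_sum fun n _ => by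
      rw [norm_mul]
      exact mul_le_of_le_one_right (norm_nonneg _) (norm_factorizationMonomial_le_one hw n)
  have hsplit : dirichletPoly c F w = c 1 + ∑ n ∈ F.erase 1, c n * factorizationMonomial w n := by
    rw [dirichletPoly, ← Finset.add_sum_erase F _ h1F]
    simp [factorizationMonomial]
  have := norm_sub_le (dirichletPoly c F w) (∑ n ∈ F.erase 1, c n * factorizationMonomial w n)
  rw [hsplit, add_sub_cancel_right, ← hsplit] at this
  linarith

theorem norm_tsum_sub_sum_le {ι E : Type*} [NormedAddCommGroup E] [CompleteSpace E]
    {b : ι → E} {a : ι → ℝ} (ha : Summable a) (hb : ∀ i, ‖b i‖ ≤ a i) (s : Finset ι) :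
    ‖∑' i, b i - ∑ i ∈ s, b i‖ ≤ ∑' i, a i - ∑ i ∈ s, a i := by
  rw [← (Summable.of_norm_bounded ha hb).sum_add_tsum_compl (s := s), ← ha.sum_add_tsum_compl,
    add_sub_cancel_left, add_sub_cancel_left]
  exact tsum_of_norm_bounded (ha.subtype _).hasSum fun i => hb i

theorem tsum_add_sum_sub_le_tsum {ι : Type*} {a b : ι → ℝ} (ha : Summable a) (hb : Summable b)
    (hab : ∀ i, a i ≤ b i) (s : Finset ι) :
    ∑' i, a i + ∑ i ∈ s, (b i - a i) ≤ ∑' i, b i := by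
  have := (hb.sub ha).sum_le_tsum s fun i _ => sub_nonneg.mpr (hab i)
  rw [hb.tsum_sub ha] at this
  linarith

theorem Complex.norm_natCast_cpow_neg_le_one {z : ℂ} (hz : 0 < z.re) (n : ℕ) :
    ‖(n : ℂ) ^ (-z)‖ ≤ 1 := by
  rcases Nat.eq_zero_or_pos n with rfl | hn
  · rw [Nat.cast_zero, Complex.zero_cpow (neg_ne_zero.mpr (Complex.ne_zero_of_re_pos hz)),
      norm_zero]
    exact zero_le_one
  · rw [Complex.norm_natCast_cpow_of_pos hn]
    exact Real.rpow_le_one_of_one_le_of_nonpos (by exact_mod_cast hn) (by simpa using hz.le)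

theorem norm_mul_natCast_cpow_neg_le (c : ℕ → ℂ) {z : ℂ} (hz : 0 < z.re) (n : ℕ) :
    ‖c n * (n : ℂ) ^ (-z)‖ ≤ ‖c n‖ := by
  rw [norm_mul]
  exact mul_le_of_le_one_right (norm_nonneg _) (Complex.norm_natCast_cpow_neg_le_one hz n)

theorem sub_le_norm_tsum_mul_natCast_cpow_neg {c : ℕ → ℂ} {F : Finset ℕ} (h1F : 1 ∈ F)
    (hc0 : c 0 = 0) (hlt : ∑ n ∈ F.erase 1, ‖c n‖ < ‖c 1‖) (hc : Summable fun n => ‖c n‖)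
    {μ : ℝ} (hμ : ∀ w : ℕ → ℂ, (∀ q, ‖w q‖ = 1) → μ ≤ ‖dirichletPoly c F w‖)
    {z : ℂ} (hz : 0 < z.re) :
    μ - (∑' n, ‖c n‖ - ∑ n ∈ F, ‖c n‖) ≤ ‖∑' n, c n * (n : ℂ) ^ (-z)‖ := by
  set P := F.biUnion Nat.primeFactors
  set w : ℕ → ℂ := P.piecewise (fun q => (q : ℂ) ^ (-z)) 1
  have hw : ∀ q, ‖w q‖ ≤ 1 := fun q => by
    by_cases hq : q ∈ P
    · simpa [w, hq] using Complex.norm_natCast_cpow_neg_le_one hz q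
    · simp [w, hq]
  have hwP : ∀ q ∉ P, ‖w q‖ = 1 := fun q hq => by simp [w, hq]
  have hpoly : ∑ n ∈ F, c n * (n : ℂ) ^ (-z) = dirichletPoly c F w := by
    refine Finset.sum_congr rfl fun n hn => ?_
    rcases eq_or_ne n 0 with rfl | hn0
    · simp [hc0]
    rw [← factorizationMonomial_natCast_cpow (-z) hn0]
    exact congrArg _ <| factorizationMonomial_congr fun q hq =>
      (Finset.piecewise_eq_of_mem P (fun q => (q : ℂ) ^ (-z)) 1
        (Finset.mem_biUnion.mpr ⟨n, hn, hq⟩)).symm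
  have hS0 : ∀ v : ℕ → ℂ, (∀ q, ‖v q‖ ≤ 1) → dirichletPoly c F v ≠ 0 := fun v hv h0 => by
    have := norm_sub_sum_le_norm_dirichletPoly h1F (c := c) hv
    rw [h0, norm_zero] at this
    linarith
  have hmain : μ ≤ ‖∑ n ∈ F, c n * (n : ℂ) ^ (-z)‖ := hpoly ▸
    le_norm_of_forall_torus_le_norm (differentiable_dirichletPoly_update c F) hS0 hμ P hw hwP
  have htail := norm_tsum_sub_sum_le hc (norm_mul_natCast_cpow_neg_le c hz) F
  linarith [norm_le_norm_add_norm_sub (∑' n, c n * (n : ℂ) ^ (-z))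
    (∑ n ∈ F, c n * (n : ℂ) ^ (-z))]

theorem stmt_17_general
    (f : ℝ → ℂ)
    (c : ℕ → ℂ)
    (hc : ∀ j : ℕ, c j = 2 * ∫ x in (0:ℝ)..1, f x * (Real.sin (j * π * x) : ℂ))
    (φ : ℕ → ℝ) (hφ : Summable (fun j : ℕ => φ (j + 1)))
    (hbd : ∀ j : ℕ, 1 ≤ j → ‖c j‖ ≤ φ j)
    (F : Finset ℕ) (h1F : 1 ∈ F)
    (μ : ℝ)
    (hμ : IsLeast {v : ℝ | ∃ w : ℕ → ℂ, (∀ q, ‖w q‖ = 1) ∧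
        v = ‖∑ n ∈ F, c n * ∏ q ∈ n.primeFactors, (w q) ^ (n.factorization q)‖} μ)
    (k : ℕ)
    (h1 : ∑ j ∈ F.erase 1, ‖c j‖ < (c 1).re)
    (h2 : 0 < μ - (∑' j : ℕ, φ (j + 1)) + (∑ j ∈ F, ‖c j‖) +
        ∑ j ∈ Finset.range k, (φ (j + 1) - ‖c (j + 1)‖)) :
    (∃ σ : ℝ, σ < 1 ∧ 0 < μ * (1 - σ) ∧
      ∀ z : ℂ, 0 < z.re →
        μ * (1 - σ) ≤ ‖∑' j : ℕ, c (j + 1) * ((j + 1 : ℕ) : ℂ) ^ (-z)‖) ∧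
    ∃ M : ℝ, ∀ z : ℂ, 0 < z.re →
      ‖∑' j : ℕ, c (j + 1) * ((j + 1 : ℕ) : ℂ) ^ (-z)‖ ≤ M := by
  have hc0 : c 0 = 0 := by simp [hc]
  have hbd' (j : ℕ) : ‖c (j + 1)‖ ≤ φ (j + 1) := hbd (j + 1) j.succ_pos
  have hsum : Summable fun n => ‖c n‖ :=
    (summable_nat_add_iff 1).mp (hφ.of_nonneg_of_le (fun _ => norm_nonneg _) hbd')
  have htsum : ∑' n, ‖c n‖ + ∑ j ∈ Finset.range k, (φ (j + 1) - ‖c (j + 1)‖) ≤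
      ∑' j, φ (j + 1) := by
    rw [hsum.tsum_eq_zero_add, hc0, norm_zero, zero_add]
    exact tsum_add_sum_sub_le_tsum ((summable_nat_add_iff 1).mpr hsum) hφ hbd' _
  have hshift (z : ℂ) (hz : 0 < z.re) : ∑' j : ℕ, c (j + 1) * ((j + 1 : ℕ) : ℂ) ^ (-z) =
      ∑' n, c n * (n : ℂ) ^ (-z) := by
    rw [(Summable.of_norm_bounded hsum (norm_mul_natCast_cpow_neg_le c hz)).tsum_eq_zero_add,
      hc0, zero_mul, zero_add]
  have hlt : ∑ n ∈ F.erase 1, ‖c n‖ < ‖c 1‖ := h1.trans_le (Complex.re_le_norm _)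
  have hμpos : 0 < μ := by
    obtain ⟨w, hw, rfl⟩ := hμ.1
    exact (sub_pos.mpr hlt).trans_le (norm_sub_sum_le_norm_dirichletPoly h1F fun q => (hw q).le)
  set L := μ - (∑' j : ℕ, φ (j + 1)) + (∑ j ∈ F, ‖c j‖) +
    ∑ j ∈ Finset.range k, (φ (j + 1) - ‖c (j + 1)‖)
  have hσ : μ * (1 - (1 - L / μ)) = L := by field_simp; ring
  refine ⟨⟨1 - L / μ, by linarith [div_pos h2 hμpos], by rwa [hσ], fun z hz => ?_⟩,
    ∑' n, ‖c n‖, fun z hz => ?_⟩ <;> rw [hshift z hz]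
  · linarith [sub_le_norm_tsum_mul_natCast_cpow_neg h1F hc0 hlt hsum
      (fun w hw => hμ.2 ⟨w, hw, rfl⟩) hz]
  · exact tsum_of_norm_bounded hsum.hasSum (norm_mul_natCast_cpow_neg_le c hz)

theorem stmt_17
    (f : ℝ → ℂ) (hper : ∀ x, f (x + 2) = f x)
    (c : ℕ → ℂ)
    (hc : ∀ j : ℕ, c j = 2 * ∫ x in (0:ℝ)..1, f x * (Real.sin (j * π * x) : ℂ))
    (φ : ℕ → ℝ) (hφ : Summable (fun j : ℕ => φ (j + 1)))
    (hbd : ∀ j : ℕ, 1 ≤ j → ‖c j‖ ≤ φ j)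
    (F : Finset ℕ) (h1F : 1 ∈ F) (hFpos : ∀ n ∈ F, 1 ≤ n)
    (μ : ℝ)
    (hμ : IsLeast {v : ℝ | ∃ w : ℕ → ℂ, (∀ q, ‖w q‖ = 1) ∧
        v = ‖∑ n ∈ F, c n * ∏ q ∈ n.primeFactors, (w q) ^ (n.factorization q)‖} μ)
    (k : ℕ)
    (hre : (c 1).im = 0)
    (h1 : ∑ j ∈ F.erase 1, ‖c j‖ < (c 1).re)
    (h2 : 0 < μ - (∑' j : ℕ, φ (j + 1)) + (∑ j ∈ F, ‖c j‖) +
        ∑ j ∈ Finset.range k, (φ (j + 1) - ‖c (j + 1)‖)) :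
    (∃ σ : ℝ, σ < 1 ∧ 0 < μ * (1 - σ) ∧
      ∀ z : ℂ, 0 < z.re →
        μ * (1 - σ) ≤ ‖∑' j : ℕ, c (j + 1) * ((j + 1 : ℕ) : ℂ) ^ (-z)‖) ∧
    ∃ M : ℝ, ∀ z : ℂ, 0 < z.re →
      ‖∑' j : ℕ, c (j + 1) * ((j + 1 : ℕ) : ℂ) ^ (-z)‖ ≤ M :=
  stmt_17_general f c hc φ hφ hbd F h1F μ hμ k h1 h2
end

section
/- Let c₁, c_p, c_{p²} be real with c₁ > 0, c_{p²} > 0 and c_{p²} + |c_p| < c₁, and suppose |c_p|(c_{p²} + c₁) < 4 c_{p²} c₁. Then min_{|w|=1} |c₁ + c_p w + c_{p²} w²| = (c₁ − c_{p²})·√(1 − c_p²/(4 c₁ c_{p²})). -/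
/-!
On the unit circle `w = x + i y` with `y² = 1 - x²`, so `‖a + b w + c w²‖²` is a quadratic in
`x = re w` alone, namely `(a - c)² + b² + 2 b (a + c) x + 4 a c x²`. Completing the square, its
minimum over `x ∈ [-1, 1]` is `(a - c)² (1 - b² / (4 a c))`, attained at the vertex
`x₀ = -b (a + c) / (4 a c)`, which lies in `[-1, 1]` exactly when `|b (a + c)| ≤ 4 a c`.
-/

open Complex

lemma sq_norm_quadratic_of_norm_eq_one (a b c : ℝ) {w : ℂ} (hw : ‖w‖ = 1) :
    ‖(a : ℂ) + b * w + c * w ^ 2‖ ^ 2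
      = (a - c) ^ 2 + b ^ 2 + 2 * b * (a + c) * w.re + 4 * a * c * w.re ^ 2 := by
  have hre_im : w.re ^ 2 + w.im ^ 2 = 1 := by
    rw [sq, sq, ← normSq_apply, normSq_eq_norm_sq, hw, one_pow]
  rw [← normSq_eq_norm_sq, normSq_apply]
  simp only [add_re, add_im, mul_re, mul_im, ofReal_re, ofReal_im, sq]
  -- substitute `im w ^ 2 = 1 - re w ^ 2`; the coefficient is the difference quotient in `im w ^ 2`
  linear_combination
    (-2 * (a + b * w.re + c * w.re ^ 2) * c + (b + 2 * c * w.re) ^ 2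
      + c ^ 2 * (w.im ^ 2 + 1 - w.re ^ 2)) * hre_im

lemma quadratic_eq_complete_square (a b c x : ℝ) (hac : a * c ≠ 0) :
    (a - c) ^ 2 + b ^ 2 + 2 * b * (a + c) * x + 4 * a * c * x ^ 2
      = (a - c) ^ 2 * (1 - b ^ 2 / (4 * a * c))
        + 4 * a * c * (x + b * (a + c) / (4 * a * c)) ^ 2 := by
  have ha : a ≠ 0 := left_ne_zero_of_mul hac
  have hc : c ≠ 0 := right_ne_zero_of_mul hac
  field_simp
  ring

theorem isLeast_norm_quadratic_on_unit_circle (a b c : ℝ) (hac : 0 < a * c)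
    (hvertex : |b * (a + c)| ≤ 4 * a * c) :
    IsLeast {v : ℝ | ∃ w : ℂ, ‖w‖ = 1 ∧ v = ‖(a : ℂ) + b * w + c * w ^ 2‖}
      (|a - c| * Real.sqrt (1 - b ^ 2 / (4 * a * c))) := by
  have h4ac : 0 < 4 * a * c := by linarith
  set x₀ := -(b * (a + c) / (4 * a * c)) with hx₀
  have hx₀_mem : |x₀| ≤ 1 := by
    rwa [hx₀, abs_neg, abs_div, abs_of_pos h4ac, div_le_one h4ac]
  have hnorm : ∀ w : ℂ, ‖w‖ = 1 → ‖(a : ℂ) + b * w + c * w ^ 2‖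
      = Real.sqrt ((a - c) ^ 2 * (1 - b ^ 2 / (4 * a * c)) + 4 * a * c * (w.re - x₀) ^ 2) := by
    intro w hw
    rw [← Real.sqrt_sq (norm_nonneg _), sq_norm_quadratic_of_norm_eq_one a b c hw,
      quadratic_eq_complete_square a b c w.re hac.ne', hx₀, sub_neg_eq_add]
  have hmin : Real.sqrt ((a - c) ^ 2 * (1 - b ^ 2 / (4 * a * c)))
      = |a - c| * Real.sqrt (1 - b ^ 2 / (4 * a * c)) := by
    rw [Real.sqrt_mul (sq_nonneg _), Real.sqrt_sq_eq_abs]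
  obtain ⟨hx₀_lower, hx₀_upper⟩ := abs_le.mp hx₀_mem
  refine ⟨⟨exp (Real.arccos x₀ * I), norm_exp_ofReal_mul_I _, ?_⟩, ?_⟩
  · rw [hnorm _ (norm_exp_ofReal_mul_I _), exp_ofReal_mul_I_re,
      Real.cos_arccos hx₀_lower hx₀_upper, sub_self, zero_pow two_ne_zero, mul_zero, add_zero,
      hmin]
  · rintro _ ⟨w, hw, rfl⟩
    rw [hnorm w hw, ← hmin]
    exact Real.sqrt_le_sqrt (le_add_of_nonneg_right (by positivity))

theorem stmt_19_general (c1 cp cp2 : ℝ) (h2 : 0 < cp2) (h : cp2 + |cp| < c1)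
    (hcond : |cp| * (cp2 + c1) < 4 * cp2 * c1) :
    IsLeast {v : ℝ | ∃ w : ℂ, ‖w‖ = 1 ∧
        v = ‖(c1 : ℂ) + (cp : ℂ) * w + (cp2 : ℂ) * w ^ 2‖}
      ((c1 - cp2) * Real.sqrt (1 - cp ^ 2 / (4 * c1 * cp2))) := by
  have hc1 : 0 < c1 := by linarith [abs_nonneg cp]
  have hvertex : |cp * (c1 + cp2)| ≤ 4 * c1 * cp2 := by
    rw [abs_mul, abs_of_pos (by positivity : 0 < c1 + cp2)]
    linarith
  have hle : 0 ≤ c1 - cp2 := by linarith [abs_nonneg cp]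
  simpa only [abs_of_nonneg hle] using
    isLeast_norm_quadratic_on_unit_circle c1 cp cp2 (by positivity) hvertex

theorem stmt_19 (c1 cp cp2 : ℝ) (h1 : 0 < c1) (h2 : 0 < cp2) (h : cp2 + |cp| < c1)
    (hcond : |cp| * (cp2 + c1) < 4 * cp2 * c1) :
    IsLeast {v : ℝ | ∃ w : ℂ, ‖w‖ = 1 ∧
        v = ‖(c1 : ℂ) + (cp : ℂ) * w + (cp2 : ℂ) * w ^ 2‖}
      ((c1 - cp2) * Real.sqrt (1 - cp ^ 2 / (4 * c1 * cp2))) :=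
  stmt_19_general c1 cp cp2 h2 h hcond
end
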